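/- arXiv:1810.04215 — 8 statements merged into one kernel-verified Lean document; each statement's English description precedes it below -/
import Mathlib

section
/- Let f ∈ ℚ[x₁,…,xₙ] be homogeneous of degree 2d, let m be the number of monomials of degree d in n variables, and let v(x) denote the column vector of all monomials x^α with |α| = d. Then f admits a rational SOS decomposition (f = Σ_{i=1}^r p_i² with p_i ∈ ℚ[x₁,…,xₙ]) if and only if there exists a symmetric positive semidefinite matrix Q ∈ ℚ^{m×m} such that f(x) = v(x)ᵗ Q v(x) holds as an identity of polynomials. -/
/-!
A sum of squares `∑ pᵢ²` can only be homogeneous of degree `2d` if every `pᵢ` has degree at most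
`d`: the top homogeneous components of the `pᵢ` would otherwise add up to a vanishing sum of squares
of degree `> 2d`. Keeping only the degree-`d` components gives `f = ∑ (cₜ ⬝ᵥ v(x))²`, with the
rational positive semidefinite Gram matrix `∑ cₜ cₜᵀ`. Conversely, a rational symmetric `Q` has a
`Q`-orthogonal basis over `ℚ`, which writes `Q = ∑ λₜ wₜ wₜᵀ` with rational `λₜ ≥ 0`; every
nonnegative rational is a sum of squares, so `v(x)ᵀ Q v(x) = ∑ λₜ (wₜ ⬝ᵥ v(x))²` is one too.
-/

open MvPolynomial Matrix

theorem isSumSq_iff_exists_fin_sum_sq {R : Type*} [CommSemiring R] {a : R} :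
    IsSumSq a ↔ ∃ (r : ℕ) (p : Fin r → R), a = ∑ i, p i ^ 2 := by
  refine ⟨fun h => ?_, fun ⟨r, p, hp⟩ => hp ▸ IsSumSq.sum_sq _ _⟩
  induction h with
  | zero => exact ⟨0, Fin.elim0, by simp⟩
  | sq_add a _ ih =>
    obtain ⟨r, p, rfl⟩ := ih
    exact ⟨r + 1, Fin.cons a p, by simp [Fin.sum_univ_succ, sq]⟩

theorem isSumSq_algebraMap_of_nonneg {A : Type*} [CommSemiring A] [Algebra ℚ A] {q : ℚ}
    (hq : 0 ≤ q) : IsSumSq (algebraMap ℚ A q) := by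
  have hq' : q = ((q.num.toNat * q.den : ℕ) : ℚ) * ((q.den : ℚ)⁻¹ * (q.den : ℚ)⁻¹) := by
    have : ((q.num.toNat : ℕ) : ℚ) = q.num := by
      exact_mod_cast Int.toNat_of_nonneg (Rat.num_nonneg.mpr hq)
    push_cast
    rw [this]
    field_simp
    exact Rat.mul_den_eq_num q
  rw [hq', map_mul, map_natCast, map_mul]
  exact (IsSumSq.natCast _).mul (IsSumSq.mul_self _)

theorem LinearMap.BilinForm.apply_eq_sum_repr_mul_repr_of_isOrthoᵢ {K V ι : Type*} [CommSemiring K]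
    [AddCommMonoid V] [Module K V] [Fintype ι]
    {B : LinearMap.BilinForm K V} {b : Module.Basis ι K V} (hb : B.IsOrthoᵢ b) (x y : V) :
    B x y = ∑ t, B (b t) (b t) * (b.repr x t * b.repr y t) := by
  conv_lhs => rw [← b.sum_repr x, ← b.sum_repr y]
  simp only [map_sum, map_smul, LinearMap.sum_apply, LinearMap.smul_apply, smul_eq_mul]
  refine Finset.sum_congr rfl fun s _ => ?_
  rw [Finset.sum_eq_single s (fun t _ hts => by rw [hb hts, mul_zero]) (by simp)]
  ring

theorem Matrix.IsSymm.exists_eq_sum_smul_vecMulVec {K ι : Type*} [Field K] [Invertible (2 : K)]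
    [Fintype ι] [DecidableEq ι] {Q : Matrix ι ι K} (hQ : Q.IsSymm) :
    ∃ (r : ℕ) (u w : Fin r → ι → K),
      Q = ∑ t, (u t ⬝ᵥ Q *ᵥ u t) • vecMulVec (w t) (w t) := by
  obtain ⟨b, hb⟩ := LinearMap.BilinForm.exists_orthogonal_basis
    (LinearMap.BilinForm.isSymm_iff.mp (Matrix.isSymm_toBilin'_iff_isSymm.mpr hQ))
  refine ⟨_, b, fun t i => b.repr (Pi.single i 1) t, ?_⟩
  ext i j
  rw [← Matrix.toBilin'_single Q, LinearMap.BilinForm.apply_eq_sum_repr_mul_repr_of_isOrthoᵢ hb]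
  simp [Matrix.sum_apply, vecMulVec_apply, toBilin'_apply']

theorem Matrix.PosSemidef.dotProduct_mulVec_nonneg_of_map_ratCast {K ι : Type*} [Field K]
    [LinearOrder K] [IsStrictOrderedRing K] [StarRing K] [TrivialStar K] [Fintype ι]
    {Q : Matrix ι ι ℚ} (hQ : (Q.map ((↑) : ℚ → K)).PosSemidef) (u : ι → ℚ) :
    0 ≤ u ⬝ᵥ Q *ᵥ u := by
  have hcast : ((u ⬝ᵥ Q *ᵥ u : ℚ) : K) =
      star (fun i => (u i : K)) ⬝ᵥ (Q.map ((↑) : ℚ → K)) *ᵥ (fun i => (u i : K)) := by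
    simp [dotProduct, mulVec]
  exact_mod_cast hcast ▸ hQ.dotProduct_mulVec_nonneg _

theorem Matrix.posSemidef_map_ratCast_sum_vecMulVec {K ι κ : Type*} [Field K] [CharZero K]
    [PartialOrder K] [StarRing K] [TrivialStar K] [StarOrderedRing K] [Fintype ι] [Fintype κ]
    (c : κ → ι → ℚ) : ((∑ t, vecMulVec (c t) (c t)).map ((↑) : ℚ → K)).PosSemidef := by
  classical
  rw [← Rat.coe_castHom, ← RingHom.mapMatrix_apply, map_sum]
  refine posSemidef_sum _ fun t _ => ?_
  convert posSemidef_vecMulVec_self_star (fun i => (c t i : K)) using 1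
  ext i j
  simp [vecMulVec_apply]

namespace MvPolynomial

variable {σ R : Type*}

theorem homogeneousComponent_add_mul [CommSemiring R] {g h : MvPolynomial σ R} {a b : ℕ}
    (hg : g.totalDegree ≤ a) (hh : h.totalDegree ≤ b) :
    homogeneousComponent (a + b) (g * h) = homogeneousComponent a g * homogeneousComponent b h := by
  classical
  ext μ
  rw [coeff_homogeneousComponent, coeff_mul, coeff_mul]
  have key : ∀ x ∈ Finset.HasAntidiagonal.antidiagonal μ,
      (if μ.degree = a + b then coeff x.1 g * coeff x.2 h else 0) =
        coeff x.1 (homogeneousComponent a g) * coeff x.2 (homogeneousComponent b h) := by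
    intro x hx
    have hsum : x.1.degree + x.2.degree = μ.degree := by
      rw [← map_add, Finset.HasAntidiagonal.mem_antidiagonal.mp hx]
    have hx1 : a < x.1.degree → coeff x.1 g = 0 := fun h1 =>
      coeff_eq_zero_of_totalDegree_lt (hg.trans_lt h1)
    have hx2 : b < x.2.degree → coeff x.2 h = 0 := fun h2 =>
      coeff_eq_zero_of_totalDegree_lt (hh.trans_lt h2)
    grind [coeff_homogeneousComponent]
  rw [← Finset.sum_congr rfl key]
  split_ifs <;> simp

theorem totalDegree_le_of_homogeneousComponent_eq_zero [CommSemiring R] {p : MvPolynomial σ R}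
    {N : ℕ} (hp : p.totalDegree ≤ N + 1) (h0 : homogeneousComponent (N + 1) p = 0) :
    p.totalDegree ≤ N := by
  refine Finset.sup_le fun s hs => ?_
  have hs_le : s.degree ≤ N + 1 := (le_totalDegree hs).trans hp
  have hs_ne : s.degree ≠ N + 1 := fun hdeg => by
    have hcoeff := congrArg (coeff s) h0
    rw [coeff_homogeneousComponent, if_pos hdeg, coeff_zero] at hcoeff
    exact mem_support_iff.mp hs hcoeff
  change s.degree ≤ N
  omega

theorem eq_zero_of_sum_sq_eq_zero [CommRing R] [LinearOrder R] [IsStrictOrderedRing R]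
    {ι : Type*} [Fintype ι] {g : ι → MvPolynomial σ R} (h : ∑ i, g i ^ 2 = 0) (i : ι) :
    g i = 0 := by
  have : Infinite R := Infinite.of_injective Nat.cast Nat.cast_injective
  refine MvPolynomial.funext fun x => ?_
  have hx : ∑ j, eval x (g j) ^ 2 = 0 := by simpa using congrArg (eval x) h
  simpa using (Finset.sum_eq_zero_iff_of_nonneg fun j _ => sq_nonneg _).mp hx i (Finset.mem_univ i)

section SumOfSquares

variable [CommRing R] [LinearOrder R] [IsStrictOrderedRing R] {ι : Type*} [Fintype ι]
  {f : MvPolynomial σ R} {d : ℕ} {p : ι → MvPolynomial σ R}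

theorem totalDegree_le_of_isHomogeneous_eq_sum_sq (hf : f.IsHomogeneous (2 * d))
    (hfp : f = ∑ i, p i ^ 2) (i : ι) : (p i).totalDegree ≤ d := by
  suffices ∀ N, (∀ i, (p i).totalDegree ≤ N) → ∀ i, (p i).totalDegree ≤ d from
    this _ (fun i => Finset.le_sup (f := fun i => (p i).totalDegree) (Finset.mem_univ i)) i
  intro N
  induction N with
  | zero => exact fun hp i => (hp i).trans (Nat.zero_le d)
  | succ N ih =>
    intro hp
    by_cases hNd : N + 1 ≤ d
    · exact fun i => (hp i).trans hNd
    have htop : ∑ i, homogeneousComponent (N + 1) (p i) ^ 2 = 0 := by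
      calc _ = homogeneousComponent (N + 1 + (N + 1)) f := by
            simp only [hfp, map_sum, sq, homogeneousComponent_add_mul (hp _) (hp _)]
        _ = 0 := by rw [homogeneousComponent_of_mem hf, if_neg (by omega)]
    exact ih fun i => totalDegree_le_of_homogeneousComponent_eq_zero (hp i)
      (eq_zero_of_sum_sq_eq_zero htop i)

theorem eq_sum_homogeneousComponent_sq_of_isHomogeneous (hf : f.IsHomogeneous (2 * d))
    (hfp : f = ∑ i, p i ^ 2) : f = ∑ i, homogeneousComponent d (p i) ^ 2 := by
  have hp := totalDegree_le_of_isHomogeneous_eq_sum_sq hf hfp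
  rw [two_mul] at hf
  calc f = homogeneousComponent (d + d) f := (homogeneousComponent_eq_self hf).symm
    _ = _ := by simp only [hfp, map_sum, sq, homogeneousComponent_add_mul (hp _) (hp _)]

end SumOfSquares

theorem eq_sum_C_coeff_mul_monomial_of_isHomogeneous [CommSemiring R] {ι : Type*} [Fintype ι]
    {v : ι → σ →₀ ℕ} (hv : Function.Injective v) {d : ℕ}
    (hvd : ∀ α : σ →₀ ℕ, α.degree = d → α ∈ Set.range v) {q : MvPolynomial σ R}
    (hq : q.IsHomogeneous d) : q = ∑ i, C (coeff (v i) q) * monomial (v i) 1 := by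
  classical
  ext μ
  simp only [C_mul_monomial, mul_one, coeff_sum, coeff_monomial]
  by_cases hμ : μ ∈ Set.range v
  · obtain ⟨i, rfl⟩ := hμ
    simp [hv.eq_iff]
  · have hdeg : μ.degree ≠ d := fun h => hμ (hvd μ h)
    rw [hq.coeff_eq_zero hdeg]
    exact (Finset.sum_eq_zero fun i _ => if_neg fun h => hμ ⟨i, h⟩).symm

theorem sum_sum_C_sum_smul_vecMulVec_mul [CommSemiring R] {ι κ : Type*} [Fintype ι] [Fintype κ]
    (c : κ → R) (w : κ → ι → R) (m : ι → MvPolynomial σ R) :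
    ∑ i, ∑ j, C ((∑ t, c t • vecMulVec (w t) (w t)) i j) * (m i * m j) =
      ∑ t, C (c t) * (∑ i, C (w t i) * m i) ^ 2 := by
  simp only [Matrix.sum_apply, Matrix.smul_apply, vecMulVec_apply, smul_eq_mul, map_sum, map_mul,
    Finset.sum_mul, sq, Finset.mul_sum]
  refine (Finset.sum_congr rfl fun i _ => Finset.sum_comm).trans (Finset.sum_comm.trans ?_)
  exact Finset.sum_congr rfl fun t _ => Finset.sum_congr rfl fun i _ =>
    Finset.sum_congr rfl fun j _ => by ring

end MvPolynomial

theorem rational_sos_iff_rational_psd_gram_matrix (n d m : ℕ)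
    (f : MvPolynomial (Fin n) ℚ) (hf : f.IsHomogeneous (2 * d))
    (v : Fin m → (Fin n →₀ ℕ)) (hv : Function.Injective v)
    (hv' : ∀ α : Fin n →₀ ℕ, Finsupp.degree α = d ↔ ∃ i, v i = α) :
    (∃ (r : ℕ) (p : Fin r → MvPolynomial (Fin n) ℚ), f = ∑ i, (p i) ^ 2) ↔
    (∃ Q : Matrix (Fin m) (Fin m) ℚ, Q.IsSymm ∧
      (Q.map ((↑) : ℚ → ℝ)).PosSemidef ∧
      f = ∑ i, ∑ j, MvPolynomial.C (Q i j) *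
        (MvPolynomial.monomial (v i) 1 * MvPolynomial.monomial (v j) 1)) := by
  constructor
  · rintro ⟨r, p, hfp⟩
    set c : Fin r → Fin m → ℚ := fun t i => coeff (v i) (homogeneousComponent d (p t))
    have hrep (t : Fin r) : homogeneousComponent d (p t) = ∑ i, C (c t i) * monomial (v i) 1 :=
      eq_sum_C_coeff_mul_monomial_of_isHomogeneous hv (fun α => (hv' α).mp)
        (homogeneousComponent_isHomogeneous d (p t))
    refine ⟨∑ t, vecMulVec (c t) (c t), by simp [Matrix.IsSymm, transpose_sum, transpose_vecMulVec],
      posSemidef_map_ratCast_sum_vecMulVec c, ?_⟩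
    have hgram := sum_sum_C_sum_smul_vecMulVec_mul (fun _ => (1 : ℚ)) c (fun i => monomial (v i) 1)
    simp only [one_smul, map_one, one_mul, ← hrep] at hgram
    rw [hgram, eq_sum_homogeneousComponent_sq_of_isHomogeneous hf hfp]
  · rintro ⟨Q, hQ, hQpsd, hfQ⟩
    obtain ⟨r, u, w, hQuw⟩ := hQ.exists_eq_sum_smul_vecMulVec
    rw [hQuw, sum_sum_C_sum_smul_vecMulVec_mul] at hfQ
    refine isSumSq_iff_exists_fin_sum_sq.mp (hfQ ▸ IsSumSq.sum fun t _ => ?_)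
    exact (isSumSq_algebraMap_of_nonneg (hQpsd.dotProduct_mulVec_nonneg_of_map_ratCast (u t))).mul
      (IsSquare.sq _).isSumSq
end

section
/- Fix U ∈ ℝ^{m×ℓ}. A matrix X ∈ ℝ^{m×m} is symmetric positive semidefinite with range(X) ⊆ range(U) (as linear maps ℝ^m → ℝ^m and ℝ^ℓ → ℝ^m given by matrix multiplication) if and only if X = U X̂ Uᵗ for some symmetric positive semidefinite matrix X̂ ∈ ℝ^{ℓ×ℓ}. -/
/-!
Over the reals every positive semidefinite `X` factors as `X = B Bᵀ`, and `B Bᵀ` has the same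
rank, hence the same range, as `B`. So `range X ⊆ range U` says that every column of `B` lies in
`range U`, i.e. `B = U C`, and then `X = U (C Cᵀ) Uᵀ`. Conversely `U X̂ Uᵀ` is positive
semidefinite whenever `X̂` is, and its range lies in that of `U`.
-/

open Matrix
open scoped ComplexOrder

namespace Matrix

theorem range_mulVecLin_le_iff_exists_eq_mul {R : Type*} [CommSemiring R] {m n k : Type*}
    [Fintype n] [Fintype k] [DecidableEq n] (U : Matrix m k R) (A : Matrix m n R) :
    LinearMap.range A.mulVecLin ≤ LinearMap.range U.mulVecLin ↔ ∃ C : Matrix k n R, A = U * C := by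
  constructor
  · intro h
    have hcol : ∀ j, ∃ c : k → R, U *ᵥ c = A.col j := fun j ↦
      h ⟨Pi.single j 1, mulVec_single_one A j⟩
    choose c hc using hcol
    refine ⟨(of c)ᵀ, ext fun i j ↦ ?_⟩
    simpa [mul_apply, mulVec, dotProduct] using (congrFun (hc j) i).symm
  · rintro ⟨C, rfl⟩
    rw [mulVecLin_mul]
    exact LinearMap.range_comp_le_range _ _

theorem range_mulVecLin_mul_conjTranspose_self {R : Type*} [Field R] [PartialOrder R] [StarRing R]
    [StarOrderedRing R] {m n : Type*} [Fintype m] [Fintype n] (B : Matrix m n R) :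
    LinearMap.range (B * Bᴴ).mulVecLin = LinearMap.range B.mulVecLin :=
  Submodule.eq_of_le_of_finrank_eq
    (by rw [mulVecLin_mul]; exact LinearMap.range_comp_le_range _ _)
    (rank_self_mul_conjTranspose B)

theorem PosSemidef.exists_eq_mul_conjTranspose_self {𝕜 : Type*} [RCLike 𝕜] {n : Type*}
    [Fintype n] [DecidableEq n] {X : Matrix n n 𝕜} (hX : X.PosSemidef) :
    ∃ B : Matrix n n 𝕜, X = B * Bᴴ := by
  open scoped MatrixOrder in
  exact ⟨CFC.sqrt X, by
    rw [(CFC.sqrt_nonneg X).posSemidef.isHermitian.eq, CFC.sqrt_mul_sqrt_self X hX.nonneg]⟩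

theorem posSemidef_and_range_le_iff_exists_eq_mul_mul_conjTranspose {𝕜 : Type*} [RCLike 𝕜]
    {m l : Type*} [Fintype m] [Fintype l] [DecidableEq m] (U : Matrix m l 𝕜)
    (X : Matrix m m 𝕜) :
    (X.PosSemidef ∧ LinearMap.range X.mulVecLin ≤ LinearMap.range U.mulVecLin) ↔
      ∃ Y : Matrix l l 𝕜, Y.PosSemidef ∧ X = U * Y * Uᴴ := by
  constructor
  · rintro ⟨hX, hrange⟩
    obtain ⟨B, rfl⟩ := hX.exists_eq_mul_conjTranspose_self
    rw [range_mulVecLin_mul_conjTranspose_self] at hrange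
    obtain ⟨C, rfl⟩ := (range_mulVecLin_le_iff_exists_eq_mul U B).1 hrange
    exact ⟨C * Cᴴ, posSemidef_self_mul_conjTranspose C, by
      simp only [conjTranspose_mul, Matrix.mul_assoc]⟩
  · rintro ⟨Y, hY, rfl⟩
    exact ⟨hY.mul_mul_conjTranspose_same U,
      (range_mulVecLin_le_iff_exists_eq_mul U _).2 ⟨Y * Uᴴ, Matrix.mul_assoc _ _ _⟩⟩

end Matrix

theorem facial_reduction_range_factorization (m l : ℕ)
    (U : Matrix (Fin m) (Fin l) ℝ) (X : Matrix (Fin m) (Fin m) ℝ) :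
    (X.PosSemidef ∧ LinearMap.range X.mulVecLin ≤ LinearMap.range U.mulVecLin) ↔
    (∃ Xhat : Matrix (Fin l) (Fin l) ℝ, Xhat.PosSemidef ∧ X = U * Xhat * Uᵀ) := by
  simpa only [conjTranspose_eq_transpose_of_trivial] using
    posSemidef_and_range_le_iff_exists_eq_mul_mul_conjTranspose U X
end

section
/- Let f ∈ ℚ[x₁,…,xₙ] be homogeneous of degree 2d, let v(x) be the vector of all monomials of degree d, and let Q be a symmetric positive semidefinite matrix with rational entries such that f(x) = v(x)ᵗ Q v(x) as polynomials. Let G ⊆ ℂ be a finite Galois extension of ℚ and let x* ∈ (G ∩ ℝ)ⁿ satisfy f(x*) = 0. Then for every field automorphism σ of G fixing ℚ, the vector σ(v(x*)) ∈ Gᵐ obtained by applying σ entrywise to v(x*) satisfies Q · σ(v(x*)) = 0. -/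
open MvPolynomial Matrix

theorem conjugates_of_zero_in_kernel_of_rational_gram_matrix (n d m : ℕ)
    (f : MvPolynomial (Fin n) ℚ) (hf : f.IsHomogeneous (2 * d))
    (v : Fin m → (Fin n →₀ ℕ)) (hv : Function.Injective v)
    (hv' : ∀ α : Fin n →₀ ℕ, Finsupp.degree α = d ↔ ∃ i, v i = α)
    (Q : Matrix (Fin m) (Fin m) ℚ) (hsym : Q.IsSymm)
    (hpsd : (Q.map ((↑) : ℚ → ℝ)).PosSemidef)
    (hQ : f = ∑ i, ∑ j, MvPolynomial.C (Q i j) *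
      (MvPolynomial.monomial (v i) 1 * MvPolynomial.monomial (v j) 1))
    (G : IntermediateField ℚ ℂ) (hfin : FiniteDimensional ℚ G) (hgal : IsGalois ℚ G)
    (xs : Fin n → G) (hreal : ∀ k, (xs k : ℂ).im = 0)
    (hxs : MvPolynomial.aeval xs f = 0)
    (σ : G ≃ₐ[ℚ] G) :
    (Q.map (algebraMap ℚ G)).mulVec
      (fun i => σ (MvPolynomial.aeval xs (MvPolynomial.monomial (v i) (1 : ℚ)))) = 0 := by
  classical
  set w : Fin m → G := fun i => MvPolynomial.aeval xs (MvPolynomial.monomial (v i) (1 : ℚ))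
    with hw
  -- the quadratic form vanishes at w
  have hsum : ∑ i, ∑ j, algebraMap ℚ G (Q i j) * (w i * w j) = 0 := by
    have h := hxs
    rw [hQ] at h
    simp only [map_sum, _root_.map_mul, MvPolynomial.aeval_C] at h
    simpa only [hw] using h
  -- real presentation of w
  set r : Fin n → ℝ := fun k => (xs k : ℂ).re with hr
  have hxr : ∀ k, ((xs k : ℂ)) = (r k : ℂ) := by
    intro k
    apply Complex.ext <;> simp [hr, hreal k]
  set u : Fin m → ℝ := fun i => ∏ k, r k ^ (v i k) with hu
  have hwu : ∀ i, ((w i : ℂ)) = (u i : ℂ) := by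
    intro i
    have h1 : (w i : ℂ) = ∏ k, (xs k : ℂ) ^ (v i k) := by
      have h0 : w i = ∏ k, xs k ^ (v i k) := by
        rw [hw]
        simp only [MvPolynomial.aeval_monomial, _root_.map_one, one_mul]
        exact Finsupp.prod_fintype _ _ (fun k => pow_zero _)
      rw [h0]
      push_cast
      ring
    rw [h1, hu]
    push_cast
    exact Finset.prod_congr rfl fun k _ => by rw [hxr k]
  -- complex version of hsum
  have h3 : ∑ i, ∑ j, (Q i j : ℂ) * ((w i : ℂ) * (w j : ℂ)) = 0 := by
    have h := congrArg (algebraMap G ℂ) hsum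
    simp only [map_sum, _root_.map_mul, map_zero, IntermediateField.algebraMap_apply,
      IntermediateField.coe_algebraMap_apply, eq_ratCast] at h
    exact h
  -- the quadratic form vanishes at u over ℝ
  have hureal : ∑ i, ∑ j, (Q i j : ℝ) * (u i * u j) = 0 := by
    have h5 : ((∑ i, ∑ j, (Q i j : ℝ) * (u i * u j) : ℝ) : ℂ) = 0 := by
      push_cast
      rw [← h3]
      refine Finset.sum_congr rfl fun i _ => Finset.sum_congr rfl fun j _ => ?_
      rw [hwu i, hwu j]
    exact_mod_cast h5
  -- PSD kernel argument
  have hdot : star u ⬝ᵥ ((Q.map ((↑) : ℚ → ℝ)) *ᵥ u) = 0 := by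
    have heq : star u ⬝ᵥ ((Q.map ((↑) : ℚ → ℝ)) *ᵥ u)
        = ∑ i, ∑ j, (Q i j : ℝ) * (u i * u j) := by
      simp only [dotProduct, Matrix.mulVec, Matrix.map_apply, Pi.star_apply,
        star_trivial, Finset.mul_sum]
      exact Finset.sum_congr rfl fun i _ => Finset.sum_congr rfl fun j _ => by ring
    rw [heq, hureal]
  have hker := (hpsd.dotProduct_mulVec_zero_iff u).mp hdot
  have hkerR : ∀ i, ∑ j, (Q i j : ℝ) * u j = 0 := by
    intro i
    have h := congrFun hker i
    simpa [Matrix.mulVec, dotProduct] using h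
  -- pull the kernel relation back to G
  have hkerG : ∀ i, ∑ j, algebraMap ℚ G (Q i j) * w j = 0 := by
    intro i
    have hC : algebraMap G ℂ (∑ j, algebraMap ℚ G (Q i j) * w j) = 0 := by
      simp only [map_sum, _root_.map_mul, IntermediateField.algebraMap_apply,
        IntermediateField.coe_algebraMap_apply, eq_ratCast]
      push_cast
      have heq : ∑ j, ((Q i j : ℂ)) * ((w j : ℂ)) = ((∑ j, (Q i j : ℝ) * u j : ℝ) : ℂ) := by
        push_cast
        exact Finset.sum_congr rfl fun j _ => by rw [hwu j]
      rw [heq, hkerR i, Complex.ofReal_zero]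
    exact (map_eq_zero_iff _ (algebraMap G ℂ).injective).mp hC
  funext i
  show ∑ j, (Q.map (algebraMap ℚ G)) i j * σ (w j) = 0
  have heq : ∑ j, (Q.map (algebraMap ℚ G)) i j * σ (w j)
      = σ (∑ j, algebraMap ℚ G (Q i j) * w j) := by
    rw [map_sum]
    exact Finset.sum_congr rfl fun j _ => by
      rw [_root_.map_mul, AlgEquiv.commutes, Matrix.map_apply]
  rw [heq, hkerG i, map_zero]
end

section
/- Let f ∈ ℚ[x₁,…,xₙ] be homogeneous of degree 2d, let v(x) be the vector of all monomials of degree d, and let Q be a symmetric positive semidefinite matrix with rational entries such that f(x) = v(x)ᵗ Q v(x) as polynomials. Let L ⊆ ℝ be a subfield that is a finite extension of ℚ, let x* ∈ Lⁿ satisfy f(x*) = 0, and let Tr_{L/ℚ}(v(x*)) ∈ ℚᵐ denote the vector obtained by applying the field trace of L over ℚ entrywise to v(x*). Then Q · Tr_{L/ℚ}(v(x*)) = 0. -/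
open MvPolynomial

theorem trace_of_zero_in_kernel_of_rational_gram_matrix (n d m : ℕ)
    (f : MvPolynomial (Fin n) ℚ) (hf : f.IsHomogeneous (2 * d))
    (v : Fin m → (Fin n →₀ ℕ)) (hv : Function.Injective v)
    (hv' : ∀ α : Fin n →₀ ℕ, Finsupp.degree α = d ↔ ∃ i, v i = α)
    (Q : Matrix (Fin m) (Fin m) ℚ) (hsym : Q.IsSymm)
    (hpsd : (Q.map ((↑) : ℚ → ℝ)).PosSemidef)
    (hQ : f = ∑ i, ∑ j, MvPolynomial.C (Q i j) *
      (MvPolynomial.monomial (v i) 1 * MvPolynomial.monomial (v j) 1))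
    (L : IntermediateField ℚ ℝ) (hfin : FiniteDimensional ℚ L)
    (xs : Fin n → L) (hxs : MvPolynomial.aeval xs f = 0) :
    Q.mulVec
      (fun i => Algebra.trace ℚ L (MvPolynomial.aeval xs (MvPolynomial.monomial (v i) (1 : ℚ)))) = 0 := by
  set w : Fin m → L := fun i => MvPolynomial.aeval xs (MvPolynomial.monomial (v i) (1 : ℚ)) with hw
  set wR : Fin m → ℝ := fun i => (w i : ℝ) with hwR
  -- the quadratic form vanishes
  have hsum : ∑ i, ∑ j, (Q i j : L) * (w i * w j) = 0 := by
    rw [hQ] at hxs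
    rw [← hxs]
    simp only [map_sum, map_mul, MvPolynomial.aeval_C]
    refine Finset.sum_congr rfl fun i _ => Finset.sum_congr rfl fun j _ => ?_
    rw [eq_ratCast (algebraMap ℚ L) (Q i j)]
  have hsumR : dotProduct (star wR) ((Q.map ((↑) : ℚ → ℝ)).mulVec wR) = 0 := by
    have := congrArg (algebraMap L ℝ) hsum
    simp only [map_sum, map_mul, map_zero] at this
    simp only [dotProduct, Matrix.mulVec, Matrix.map_apply, Pi.star_apply,
      star_trivial, dotProduct, Finset.mul_sum]
    rw [← this]
    refine Finset.sum_congr rfl fun i _ => Finset.sum_congr rfl fun j _ => ?_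
    have : (algebraMap L ℝ) ((Q i j : L)) = (Q i j : ℝ) := by
      simp [IntermediateField.algebraMap_apply]
    rw [this]
    simp only [hwR, IntermediateField.algebraMap_apply]
    ring
  have hker : (Q.map ((↑) : ℚ → ℝ)).mulVec wR = 0 :=
    (hpsd.dotProduct_mulVec_zero_iff wR).mp hsumR
  funext i
  have hiR : ∑ j, (Q i j : ℝ) * wR j = 0 := by
    have := congrFun hker i
    simpa [Matrix.mulVec, dotProduct] using this
  have hiL : ∑ j, Q i j • w j = 0 := by
    apply (algebraMap L ℝ).injective
    simp only [map_sum, map_zero]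
    rw [← hiR]
    refine Finset.sum_congr rfl fun j _ => ?_
    rw [Algebra.smul_def, map_mul]
    congr 1
  have := congrArg (Algebra.trace ℚ L) hiL
  simp only [map_sum, map_zero, map_smul] at this
  simpa [Matrix.mulVec, dotProduct, smul_eq_mul] using this
end

section
/- Let f ∈ ℚ[x₁,…,xₙ]. If f is a sum of two squares in the rational function field ℚ(x₁,…,xₙ), i.e. f = r₁² + r₂² for some rational functions r₁, r₂ ∈ ℚ(x₁,…,xₙ), then f is a sum of two squares in ℚ[x₁,…,xₙ], i.e. there exist q₁, q₂ ∈ ℚ[x₁,…,xₙ] with f = q₁² + q₂². -/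
/-!
Clearing denominators gives `f * g ^ 2 = a ^ 2 + b ^ 2` with `g ≠ 0`. Over `K = ℚ(i)` this says
`N z = f * N g` in the unique factorization domain `K[x₁, …, xₙ]`, where `N z = z * conj z`
and `z = a + i b`. Remove the prime factors `π` of `g` in `K[x₁, …, xₙ]` one at a time: `π` divides
`z` or `conj z`, which have the same norm, so `N π` cancels from both sides. When only a unit is
left, `f` itself is a norm, and `N (A + i B) = A ^ 2 + B ^ 2` for `A, B ∈ ℚ[x₁, …, xₙ]`.
-/

open MvPolynomial QuadraticAlgebra

theorem UniqueFactorizationMonoid.exists_mul_map_eq_of_mul_map_eq_mul_mul_map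
    {M F : Type*} [CommMonoidWithZero M] [UniqueFactorizationMonoid M]
    [FunLike F M M] [MonoidWithZeroHomClass F M M] {conj : F} (hconj : Function.Involutive conj)
    {a w z : M} (hw : w ≠ 0) (h : z * conj z = a * (w * conj w)) :
    ∃ y, y * conj y = a := by
  induction w using UniqueFactorizationMonoid.induction_on_prime generalizing z with
  | h₁ => exact absurd rfl hw
  | h₂ u hu =>
    obtain ⟨u, rfl⟩ := hu
    refine ⟨z * ↑u⁻¹, ?_⟩
    calc z * ↑u⁻¹ * conj (z * ↑u⁻¹) = z * conj z * (↑u⁻¹ * conj ↑u⁻¹) := by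
          rw [map_mul, mul_mul_mul_comm]
      _ = a * ((↑u * ↑u⁻¹) * conj (↑u * ↑u⁻¹)) := by
          rw [h, map_mul, mul_mul_mul_comm (u : M), mul_assoc, ← mul_mul_mul_comm]
      _ = a := by rw [Units.mul_inv, map_one, mul_one, mul_one]
  | h₃ w π hw₀ hπ ih =>
    obtain ⟨z', hz'z, hπz'⟩ : ∃ z', z' * conj z' = z * conj z ∧ π ∣ z' := by
      have hπ_dvd : π ∣ z * conj z := h ▸ ((dvd_mul_right π w).mul_right _).mul_left a
      rcases hπ.dvd_or_dvd hπ_dvd with hπz | hπz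
      · exact ⟨z, rfl, hπz⟩
      · exact ⟨conj z, by rw [hconj z, mul_comm], hπz⟩
    obtain ⟨y, rfl⟩ := hπz'
    have hconjπ : conj π ≠ 0 := fun h0 =>
      hπ.ne_zero (hconj.injective (h0.trans (map_zero conj).symm))
    refine ih (z := y) hw₀ (mul_left_cancel₀ (mul_ne_zero hπ.ne_zero hconjπ) ?_)
    calc π * conj π * (y * conj y) = π * y * conj (π * y) := by rw [map_mul]; ac_rfl
      _ = π * conj π * (a * (w * conj w)) := by rw [hz'z, h, map_mul]; ac_rfl

theorem IsFractionRing.exists_mul_sq_eq_sq_add_sq {A K : Type*} [CommRing A] [Field K]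
    [Algebra A K] [IsFractionRing A K] {f : A} {r₁ r₂ : K}
    (h : algebraMap A K f = r₁ ^ 2 + r₂ ^ 2) :
    ∃ g a b : A, g ≠ 0 ∧ f * g ^ 2 = a ^ 2 + b ^ 2 := by
  obtain ⟨a₁, d₁, hd₁, rfl⟩ := div_surjective (A := A) r₁
  obtain ⟨a₂, d₂, hd₂, rfl⟩ := div_surjective (A := A) r₂
  have hd₁' := (IsLocalization.map_units K ⟨d₁, hd₁⟩).ne_zero
  have hd₂' := (IsLocalization.map_units K ⟨d₂, hd₂⟩).ne_zero
  refine ⟨d₁ * d₂, a₁ * d₂, a₂ * d₁, fun h0 => mul_ne_zero hd₁' hd₂' ?_,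
    IsFractionRing.injective A K ?_⟩
  · rw [← map_mul, h0, map_zero]
  · simp only [map_mul, map_pow, map_add, h]
    field_simp

section GaussianPolynomials

variable {σ k : Type*} [CommRing k]

theorem QuadraticAlgebra.star_algebraMap {a b : k} (r : k) :
    star (algebraMap k (QuadraticAlgebra k a b) r) = algebraMap k _ r := by
  ext <;> simp [algebraMap_eq]

theorem QuadraticAlgebra.star_omega_neg_one_zero : star (ω : QuadraticAlgebra k (-1) 0) = -ω := by
  ext <;> simp

theorem QuadraticAlgebra.omega_mul_omega_neg_one_zero :
    (ω : QuadraticAlgebra k (-1) 0) * ω = -1 := by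
  simp [omega_mul_omega_eq_algebraMap]

theorem MvPolynomial.exists_eq_map_add_C_omega_mul_map {a b : k}
    (z : MvPolynomial σ (QuadraticAlgebra k a b)) :
    ∃ A B : MvPolynomial σ k, z = map (algebraMap k _) A + C ω * map (algebraMap k _) B := by
  induction z using MvPolynomial.induction_on with
  | C c =>
    refine ⟨C c.re, C c.im, ?_⟩
    simp only [map_C, ← C_mul, ← map_add]
    congr 1
    ext <;> simp
  | add p q hp hq =>
    obtain ⟨A₁, B₁, rfl⟩ := hp
    obtain ⟨A₂, B₂, rfl⟩ := hq
    exact ⟨A₁ + A₂, B₁ + B₂, by simp only [map_add]; ring⟩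
  | mul_X p j hp =>
    obtain ⟨A, B, rfl⟩ := hp
    exact ⟨A * X j, B * X j, by simp only [map_mul, map_X]; ring⟩

theorem MvPolynomial.map_star_map_algebraMap {a b : k} (p : MvPolynomial σ k) :
    map (starRingEnd (QuadraticAlgebra k a b)) (map (algebraMap k _) p) =
      map (algebraMap k _) p := by
  rw [map_map]
  congr 2
  exact RingHom.ext star_algebraMap

theorem MvPolynomial.map_star_involutive {a b : k} :
    Function.Involutive (map (starRingEnd (QuadraticAlgebra k a b)) : MvPolynomial σ _ → _) := by
  intro p
  rw [map_map]
  convert map_id p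
  exact RingHom.ext star_star

theorem MvPolynomial.mul_map_star_eq_map_sq_add_sq (A B : MvPolynomial σ k) :
    (map (algebraMap k (QuadraticAlgebra k (-1) 0)) A + C ω * map (algebraMap k _) B) *
        map (starRingEnd _) (map (algebraMap k _) A + C ω * map (algebraMap k _) B) =
      map (algebraMap k _) (A ^ 2 + B ^ 2) := by
  have hω : (C ω : MvPolynomial σ (QuadraticAlgebra k (-1) 0)) * C ω = -1 := by
    rw [← C_mul, omega_mul_omega_neg_one_zero, C_neg, C_1]
  simp only [map_add, map_mul, map_C, map_star_map_algebraMap, map_pow, starRingEnd_apply,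
    star_omega_neg_one_zero, C_neg]
  linear_combination (-(map (algebraMap k (QuadraticAlgebra k (-1) 0)) B ^ 2)) * hω

end GaussianPolynomials

theorem MvPolynomial.exists_sq_add_sq_of_mul_sq_eq_sq_add_sq {σ k : Type*} [Field k]
    (hk : ∀ r : k, r ^ 2 ≠ -1) {f g a b : MvPolynomial σ k} (hg : g ≠ 0)
    (h : f * g ^ 2 = a ^ 2 + b ^ 2) :
    ∃ q₁ q₂ : MvPolynomial σ k, f = q₁ ^ 2 + q₂ ^ 2 := by
  -- makes `QuadraticAlgebra k (-1) 0 = k(i)` a field, hence `MvPolynomial σ k(i)` a UFD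
  have : Fact (∀ r : k, r ^ 2 ≠ -1 + 0 * r) := ⟨by simpa using hk⟩
  let ι : MvPolynomial σ k →+* MvPolynomial σ (QuadraticAlgebra k (-1) 0) :=
    map (algebraMap k _)
  have hι : Function.Injective ι := map_injective _ algebraMap_injective
  have hnorm : (ι a + C ω * ι b) * map (starRingEnd _) (ι a + C ω * ι b) =
      ι f * (ι g * map (starRingEnd _) (ι g)) := by
    rw [mul_map_star_eq_map_sq_add_sq, map_star_map_algebraMap, ← h, map_mul, map_pow, sq]
  obtain ⟨y, hy⟩ := UniqueFactorizationMonoid.exists_mul_map_eq_of_mul_map_eq_mul_mul_map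
    map_star_involutive ((map_ne_zero_iff ι hι).mpr hg) hnorm
  obtain ⟨A, B, rfl⟩ := exists_eq_map_add_C_omega_mul_map y
  exact ⟨A, B, hι (by rw [← mul_map_star_eq_map_sq_add_sq, hy])⟩

theorem sum_two_squares_in_fraction_field_descends_to_polynomials (n : ℕ)
    (f : MvPolynomial (Fin n) ℚ)
    (r₁ r₂ : FractionRing (MvPolynomial (Fin n) ℚ))
    (hf : algebraMap (MvPolynomial (Fin n) ℚ) (FractionRing (MvPolynomial (Fin n) ℚ)) f
      = r₁ ^ 2 + r₂ ^ 2) :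
    ∃ q₁ q₂ : MvPolynomial (Fin n) ℚ, f = q₁ ^ 2 + q₂ ^ 2 := by
  obtain ⟨g, a, b, hg, h⟩ := IsFractionRing.exists_mul_sq_eq_sq_add_sq hf
  exact exists_sq_add_sq_of_mul_sq_eq_sq_add_sq (fun r hr => by nlinarith [sq_nonneg r]) hg h
end

section
/- Let K ⊆ ℝ be a subfield that is a finite extension of ℚ of degree d. If f ∈ ℚ[x₁,…,xₙ] satisfies f = p₁² + p₂² for some p₁, p₂ ∈ K[x₁,…,xₙ], then there exist P₁, P₂ ∈ ℚ[x₁,…,xₙ] such that f^d = P₁² + P₂². -/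
/-!
Adjoin `i = √-1` to the base: in `R[i] ⊗[R] S` the element `z = x + i y` satisfies
`z * conj z = x ^ 2 + y ^ 2 = f`, where `conj` conjugates the `R[i]` factor. The norm from
`R[i] ⊗[R] S` down to `R[i]` is multiplicative, commutes with `conj` and sends `f` to `f ^ d`, so
`f ^ d = N z * conj (N z) = u ^ 2 + v ^ 2` for `N z = u + i v`. Polynomials over `K` are the base
change of polynomials over `ℚ` along `ℚ → K`.
-/

open TensorProduct

namespace QuadraticAlgebra

variable {R : Type*} [CommRing R] {a b : R}

theorem star_algebraMap_s13 (r : R) :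
    star (algebraMap R (QuadraticAlgebra R a b) r) = algebraMap R _ r := by
  ext <;> simp

variable (a b) in
def starAlgEquiv : QuadraticAlgebra R a b ≃ₐ[R] QuadraticAlgebra R a b :=
  { starRingAut with commutes' := star_algebraMap_s13 }

variable (S : Type*) [CommRing S] [Algebra R S]

variable (a b) in
def starTensor : QuadraticAlgebra R a b ⊗[R] S ≃ₐ[R] QuadraticAlgebra R a b ⊗[R] S :=
  Algebra.TensorProduct.congr (starAlgEquiv a b) AlgEquiv.refl

theorem norm_starTensor (x : QuadraticAlgebra R a b ⊗[R] S) :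
    Algebra.norm (QuadraticAlgebra R a b) (starTensor a b S x) =
      star (Algebra.norm (QuadraticAlgebra R a b) x) := by
  have h := Algebra.norm_eq_of_equiv_equiv (starAlgEquiv a b).toRingEquiv
    (starTensor a b S).toRingEquiv (by ext; simp [starTensor, starAlgEquiv]) x
  rw [RingEquiv.eq_symm_apply] at h
  exact h.symm

section GaussianBase

variable {S}

local notation "R[i]" => QuadraticAlgebra R (-1) 0

theorem norm_eq_sq_add_sq (z : R[i]) : norm z = z.re ^ 2 + z.im ^ 2 := by
  rw [norm_def]
  ring

theorem omega_sq : (ω : R[i]) ^ 2 = -1 := by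
  rw [sq, omega_mul_omega_eq_algebraMap]
  simp

theorem star_omega : star (ω : R[i]) = -ω := by
  ext <;> simp

theorem mul_starTensor_self (x y : S) :
    let z : R[i] ⊗[R] S := Algebra.TensorProduct.includeRight x +
      algebraMap R[i] (R[i] ⊗[R] S) ω * Algebra.TensorProduct.includeRight y
    z * starTensor (-1 : R) 0 S z = Algebra.TensorProduct.includeRight (x ^ 2 + y ^ 2) := by
  intro z
  have hω : algebraMap R[i] (R[i] ⊗[R] S) ω ^ 2 = -1 := by
    rw [← map_pow, omega_sq, map_neg, map_one]
  have hstar : starTensor (-1 : R) 0 S z = Algebra.TensorProduct.includeRight x -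
      algebraMap R[i] (R[i] ⊗[R] S) ω * Algebra.TensorProduct.includeRight y := by
    simp [z, starTensor, starAlgEquiv, star_omega, neg_tmul, sub_eq_add_neg]
  rw [hstar, map_add, map_pow, map_pow]
  linear_combination (-(Algebra.TensorProduct.includeRight y : R[i] ⊗[R] S) ^ 2) * hω

end GaussianBase

end QuadraticAlgebra

open QuadraticAlgebra in
theorem Algebra.exists_sq_add_sq_pow_finrank {R S : Type*} [CommRing R] [Nontrivial R]
    [CommRing S] [Algebra R S] [Module.Free R S] [Module.Finite R S] (f : R) (x y : S)
    (h : algebraMap R S f = x ^ 2 + y ^ 2) :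
    ∃ u v : R, f ^ Module.finrank R S = u ^ 2 + v ^ 2 := by
  set z : QuadraticAlgebra R (-1) 0 ⊗[R] S := Algebra.TensorProduct.includeRight x +
    algebraMap (QuadraticAlgebra R (-1) 0) _ ω * Algebra.TensorProduct.includeRight y
  set g := Algebra.norm (QuadraticAlgebra R (-1) 0) z
  refine ⟨g.re, g.im, algebraMap_injective (a := -1) (b := 0) ?_⟩
  rw [← norm_eq_sq_add_sq, algebraMap_norm_eq_mul_star, ← norm_starTensor, ← map_mul,
    mul_starTensor_self, ← h, Algebra.TensorProduct.includeRight_apply,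
    ← Algebra.TensorProduct.algebraMap_apply',
    IsScalarTower.algebraMap_apply R (QuadraticAlgebra R (-1) 0)
      (QuadraticAlgebra R (-1) 0 ⊗[R] S) f,
    Algebra.norm_algebraMap, Module.finrank_baseChange, map_pow]

theorem MvPolynomial.exists_sq_add_sq_pow_finrank {σ k K : Type*} [CommRing k] [Nontrivial k]
    [CommRing K] [Algebra k K] [Module.Free k K] [Module.Finite k K] (f : MvPolynomial σ k)
    (p₁ p₂ : MvPolynomial σ K) (h : map (algebraMap k K) f = p₁ ^ 2 + p₂ ^ 2) :
    ∃ P₁ P₂ : MvPolynomial σ k, f ^ Module.finrank k K = P₁ ^ 2 + P₂ ^ 2 := by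
  let ψ : MvPolynomial σ K →+* MvPolynomial σ k ⊗[k] K :=
    (Algebra.TensorProduct.comm k K _).toRingHom.comp (algebraTensorAlgEquiv k K).symm.toRingHom
  have hψ : ψ (map (algebraMap k K) f) = algebraMap _ (MvPolynomial σ k ⊗[k] K) f := by
    have hsymm : (algebraTensorAlgEquiv k K).symm (map (algebraMap k K) f) = 1 ⊗ₜ f := by
      rw [AlgEquiv.symm_apply_eq, algebraTensorAlgEquiv_tmul, one_smul]
    simp [ψ, hsymm]
  simpa using Algebra.exists_sq_add_sq_pow_finrank f (ψ p₁) (ψ p₂)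
    (by rw [← hψ, h, map_add, map_pow, map_pow])

theorem power_of_sum_two_squares_over_number_field_is_rational_sum_two_squares (n : ℕ)
    (K : IntermediateField ℚ ℝ) (hfin : FiniteDimensional ℚ K)
    (d : ℕ) (hd : Module.finrank ℚ K = d)
    (f : MvPolynomial (Fin n) ℚ)
    (p₁ p₂ : MvPolynomial (Fin n) K)
    (hf : MvPolynomial.map (algebraMap ℚ K) f = p₁ ^ 2 + p₂ ^ 2) :
    ∃ P₁ P₂ : MvPolynomial (Fin n) ℚ, f ^ d = P₁ ^ 2 + P₂ ^ 2 :=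
  hd ▸ MvPolynomial.exists_sq_add_sq_pow_finrank f p₁ p₂ hf
end

section
/- Let α ∈ ℝ be the real cube root of 2 (so α³ = 2) and let f ∈ ℚ[x,y,z,w] be the polynomial f = 4w⁴x² + 56w⁴xz + 200w⁴z² − 504w³x²z − 3696w³xz² − 112w²x⁴ − 656w²x³z − 12w²x²y² + 168w²x²yz + 20008w²x²z² − 88w²xy²z + 2352w²xyz² + 11200w²xz³ + 8400w²yz³ + 20000w²z⁴ + 16wx⁴y + 7896wx⁴z + 128wx³yz − 10752wx³z² + 840wx²y²z − 10328wx²yz² − 76944wx²z³ − 77616wxyz³ − 184800wxz⁴ + 932x⁶ − 1656x⁵z + 188x⁴y² − 2352x⁴yz − 10020x⁴z² − 256x³y²z − 13776x³yz² + 3520x³z³ + 10x²y⁴ − 252x²y³z − 68x²y²z² + 49728x²yz³ + 175824x²z⁴ − 1848xy³z² + 20296xy²z³ + 235200xyz⁴ + 420000xz⁵ + 88200y²z⁴ + 420000yz⁵ + 500000z⁶. Then there exist polynomials p₁, p₂, p₃ ∈ ℚ(α)[x,y,z,w] such that f = p₁² + p₂² + p₃². -/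
open MvPolynomial

set_option maxHeartbeats 2000000

/-- The polynomial of Section 5 of the paper, over an arbitrary commutative ring,
in the variables `x = X 0`, `y = X 1`, `z = X 2`, `w = X 3`. -/
noncomputable def counterexamplePoly (R : Type) [CommRing R] : MvPolynomial (Fin 4) R :=
  let x : MvPolynomial (Fin 4) R := MvPolynomial.X 0
  let y : MvPolynomial (Fin 4) R := MvPolynomial.X 1
  let z : MvPolynomial (Fin 4) R := MvPolynomial.X 2
  let w : MvPolynomial (Fin 4) R := MvPolynomial.X 3
  4*w^4*x^2 + 56*w^4*x*z + 200*w^4*z^2 - 504*w^3*x^2*z - 3696*w^3*x*z^2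
    - 112*w^2*x^4 - 656*w^2*x^3*z - 12*w^2*x^2*y^2 + 168*w^2*x^2*y*z
    + 20008*w^2*x^2*z^2 - 88*w^2*x*y^2*z + 2352*w^2*x*y*z^2 + 11200*w^2*x*z^3
    + 8400*w^2*y*z^3 + 20000*w^2*z^4 + 16*w*x^4*y + 7896*w*x^4*z
    + 128*w*x^3*y*z - 10752*w*x^3*z^2 + 840*w*x^2*y^2*z - 10328*w*x^2*y*z^2
    - 76944*w*x^2*z^3 - 77616*w*x*y*z^3 - 184800*w*x*z^4 + 932*x^6
    - 1656*x^5*z + 188*x^4*y^2 - 2352*x^4*y*z - 10020*x^4*z^2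
    - 256*x^3*y^2*z - 13776*x^3*y*z^2 + 3520*x^3*z^3 + 10*x^2*y^4
    - 252*x^2*y^3*z - 68*x^2*y^2*z^2 + 49728*x^2*y*z^3 + 175824*x^2*z^4
    - 1848*x*y^3*z^2 + 20296*x*y^2*z^3 + 235200*x*y*z^4 + 420000*x*z^5
    + 88200*y^2*z^4 + 420000*y*z^5 + 500000*z^6

theorem counterexample_is_sum_of_three_squares_over_cubic_field
    (α : ℝ) (hα : α ^ 3 = 2) :
    ∃ p₁ p₂ p₃ : MvPolynomial (Fin 4) (IntermediateField.adjoin ℚ {α}),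
      MvPolynomial.map (algebraMap ℚ (IntermediateField.adjoin ℚ {α}))
        (counterexamplePoly ℚ) = p₁ ^ 2 + p₂ ^ 2 + p₃ ^ 2 := by
  have hmem : α ∈ IntermediateField.adjoin ℚ {α} :=
    IntermediateField.subset_adjoin ℚ {α} rfl
  set a : (IntermediateField.adjoin ℚ {α}) := ⟨α, hmem⟩ with ha_def
  have ha : a ^ 3 = 2 := by
    apply Subtype.ext
    push_cast
    exact hα
  set x : MvPolynomial (Fin 4) (IntermediateField.adjoin ℚ {α}) := X 0 with hx
  set y : MvPolynomial (Fin 4) (IntermediateField.adjoin ℚ {α}) := X 1 with hy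
  set z : MvPolynomial (Fin 4) (IntermediateField.adjoin ℚ {α}) := X 2 with hz
  set w : MvPolynomial (Fin 4) (IntermediateField.adjoin ℚ {α}) := X 3 with hw
  set A : MvPolynomial (Fin 4) (IntermediateField.adjoin ℚ {α}) := C a with hA_def
  have hA : A ^ 3 = 2 := by
    rw [hA_def, ← map_pow, ha]
    exact map_ofNat C 2
  refine ⟨14*z*w^2 + 700*z^3 + 294*y*z^2 + 2*x*w^2 - 126*x*z*w + 296*x*z^2 - 8*A^2*x*z^2
      + 42*x*y*z - 3*x*y^2 + 42*x^2*z - 8*A*x^2*z - 2*A^2*x^2*z - 28*x^3 - 2*A*x^3,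
    2*z*w^2 + 100*z^3 + 42*y*z^2 - 42*x*z*w + 28*x*z^2 + 56*A^2*x*z^2 - x*y^2
      + 2*x^2*z + 24*A*x^2*z + 22*A^2*x^2*z - 10*x^3 + 6*A*x^3 + 2*A^2*x^3,
    8*A^2*x*z*w + 168*x*z^2 + 8*A*x*y*z + 2*A^2*x^2*w + 42*x^2*z + 2*A*x^2*y, ?_⟩
  simp only [counterexamplePoly, map_add, map_sub, map_mul, map_pow, MvPolynomial.map_X,
    map_ofNat, ← hx, ← hy, ← hz, ← hw]
  linear_combination (-(64*A*x^2*z^2*w^2 + 3200*A*x^2*z^4 + 128*x^2*y*z^2*w + 32*A*x^3*z*w^2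
    + 2816*x^3*z^3 + 2496*A*x^3*z^3 + 64*x^3*y*z*w + 4*A*x^4*w^2 + 1792*x^4*z^2
    + 712*A*x^4*z^2 + 8*x^4*y*w + 368*x^5*z + 88*A*x^5*z + 24*x^6 + 4*A*x^6)) * hA
end

section
/- The Motzkin polynomial f = x⁴y² + x²y⁴ − 3x²y²z² + z⁶ ∈ ℝ[x,y,z] is nonnegative on ℝ³ but does not admit a SOS decomposition: there do not exist r ∈ ℕ and polynomials p₁,…,p_r ∈ ℝ[x,y,z] with f = Σ_{i=1}^r p_i². -/
/-!
Nonnegativity is AM-GM for `x⁴y², x²y⁴, z⁶`. Suppose `f = ∑ pᵢ²`. For any weight `w`, the top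
`w`-homogeneous component of `∑ pᵢ²` is the sum of the squares of the top components of the `pᵢ`
of maximal weighted degree, which is nonzero over an ordered field; hence
`2 · deg_w pᵢ ≤ deg_w f`. Three weights confine the exponents of each `pᵢ` to a region in which
`(2,2,2) = (1,1,1) + (1,1,1)` is the only splitting of `(2,2,2)`, so the coefficient `-3` of
`x²y²z²` in `f` equals `∑ coeff_{xyz}(pᵢ)² ≥ 0`.
-/

open MvPolynomial
open Finsupp (weight)

namespace MvPolynomial

variable {σ ι R M : Type*}

theorem weightedHomogeneousComponent_weightedTotalDegree_ne_zero [CommSemiring R]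
    [AddCommMonoid M] [LinearOrder M] [OrderBot M] (w : σ → M) {p : MvPolynomial σ R}
    (hp : p ≠ 0) : weightedHomogeneousComponent w (weightedTotalDegree w p) p ≠ 0 := by
  classical
  obtain ⟨d, hd, hwd⟩ := Finset.exists_mem_eq_sup p.support (support_nonempty.2 hp) (weight w)
  refine ne_of_apply_ne (coeff d) ?_
  have hwd : weight w d = weightedTotalDegree w p := hwd.symm
  rw [coeff_weightedHomogeneousComponent, if_pos hwd, coeff_zero]
  exact mem_support_iff.1 hd

theorem weightedHomogeneousComponent_add_self_sq [CommSemiring R] (w : σ → ℕ)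
    {q : MvPolynomial σ R} {n : ℕ} (hq : weightedTotalDegree w q ≤ n) :
    weightedHomogeneousComponent w (n + n) (q ^ 2) = weightedHomogeneousComponent w n q ^ 2 := by
  classical
  have hle : ∀ a, coeff a q ≠ 0 → weight w a ≤ n := fun a ha =>
    (le_weightedTotalDegree w (mem_support_iff.2 ha)).trans hq
  ext m
  rw [sq, sq, coeff_weightedHomogeneousComponent, coeff_mul, coeff_mul]
  split_ifs with hm
  · refine Finset.sum_congr rfl fun ⟨a, b⟩ hab => ?_
    rw [Finset.HasAntidiagonal.mem_antidiagonal] at hab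
    simp only [coeff_weightedHomogeneousComponent]
    have hsum : weight w a + weight w b = n + n := by rw [← map_add, hab, hm]
    by_cases ha : coeff a q = 0
    · simp [ha]
    by_cases hb : coeff b q = 0
    · simp [hb]
    have := hle a ha; have := hle b hb
    rw [if_pos (by omega), if_pos (by omega)]
  · refine (Finset.sum_eq_zero fun ⟨a, b⟩ hab => ?_).symm
    rw [Finset.HasAntidiagonal.mem_antidiagonal] at hab
    simp only [coeff_weightedHomogeneousComponent]
    split_ifs with ha hb
    · exact absurd (by rw [← hab, map_add, ha, hb]) hm
    all_goals simp

theorem eq_zero_of_sum_sq_eq_zero_s17 [Field R] [LinearOrder R] [IsStrictOrderedRing R]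
    {s : Finset ι} {p : ι → MvPolynomial σ R} (h : ∑ j ∈ s, p j ^ 2 = 0) {i : ι} (hi : i ∈ s) :
    p i = 0 := by
  refine MvPolynomial.funext fun x => ?_
  have hx : ∑ j ∈ s, eval x (p j) ^ 2 = 0 := by simpa using congrArg (eval x) h
  simpa using (Finset.sum_eq_zero_iff_of_nonneg fun j _ => sq_nonneg (eval x (p j))).1 hx i hi

theorem two_mul_weightedTotalDegree_le_sum_sq [Field R] [LinearOrder R] [IsStrictOrderedRing R]
    (w : σ → ℕ) {s : Finset ι} (p : ι → MvPolynomial σ R) {i : ι} (hi : i ∈ s) :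
    2 * weightedTotalDegree w (p i) ≤ weightedTotalDegree w (∑ j ∈ s, p j ^ 2) := by
  classical
  obtain ⟨k, hk, hmax⟩ := s.exists_max_image (fun j => weightedTotalDegree w (p j)) ⟨i, hi⟩
  set n := weightedTotalDegree w (p k)
  by_cases hpk : p k = 0
  · have : n = 0 := by simp [n, hpk, weightedTotalDegree_zero]
    have := hmax i hi
    omega
  have htop : weightedHomogeneousComponent w (n + n) (∑ j ∈ s, p j ^ 2) ≠ 0 := by
    rw [map_sum, Finset.sum_congr rfl fun j hj =>
      weightedHomogeneousComponent_add_self_sq w (hmax j hj)]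
    exact fun h => weightedHomogeneousComponent_weightedTotalDegree_ne_zero w hpk
      (eq_zero_of_sum_sq_eq_zero_s17 h hk)
  obtain ⟨m, hm⟩ := ne_zero_iff.1 htop
  rw [coeff_weightedHomogeneousComponent, ite_ne_right_iff] at hm
  obtain ⟨hwm, hm⟩ := hm
  calc 2 * weightedTotalDegree w (p i) ≤ n + n := by have := hmax i hi; omega
    _ = weight w m := hwm.symm
    _ ≤ _ := le_weightedTotalDegree w (mem_support_iff.2 hm)

theorem coeff_add_self_sq [CommSemiring R] {p : MvPolynomial σ R} {a₀ : σ →₀ ℕ}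
    (h : ∀ a b, a + b = a₀ + a₀ → a ∈ p.support → b ∈ p.support → a = a₀) :
    coeff (a₀ + a₀) (p ^ 2) = coeff a₀ p ^ 2 := by
  classical
  rw [sq, coeff_mul, sq]
  refine Finset.sum_eq_single_of_mem (a₀, a₀) (Finset.HasAntidiagonal.mem_antidiagonal.2 rfl) ?_
  rintro ⟨a, b⟩ hab hne
  rw [Finset.HasAntidiagonal.mem_antidiagonal] at hab
  by_contra hab0
  have ha : a ∈ p.support := mem_support_iff.2 (left_ne_zero_of_mul hab0)
  have hb : b ∈ p.support := mem_support_iff.2 (right_ne_zero_of_mul hab0)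
  rw [h a b hab ha hb, h b a (by rwa [add_comm]) hb ha] at hne
  exact hne rfl

end MvPolynomial

namespace Motzkin

theorem form_nonneg (x y z : ℝ) :
    0 ≤ x ^ 4 * y ^ 2 + x ^ 2 * y ^ 4 - 3 * x ^ 2 * y ^ 2 * z ^ 2 + z ^ 6 := by
  -- AM-GM for x⁴y², x²y⁴, z⁶: with s = |x||y| and t = z², it is 2s³ + t³ - 3s²t = (s - t)²(2s + t)
  have h : x ^ 4 * y ^ 2 + x ^ 2 * y ^ 4 - 3 * x ^ 2 * y ^ 2 * z ^ 2 + z ^ 6 =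
      (|x| * |y|) ^ 2 * (|x| - |y|) ^ 2 + (|x| * |y| - z ^ 2) ^ 2 * (2 * |x| * |y| + z ^ 2) := by
    linear_combination (-((x ^ 2 + |x| ^ 2) * y ^ 2 + y ^ 4 - 3 * y ^ 2 * z ^ 2)) * sq_abs x
      + (-(|x| ^ 4 + |x| ^ 2 * (y ^ 2 + |y| ^ 2) - 3 * |x| ^ 2 * z ^ 2)) * sq_abs y
  rw [h]
  positivity

noncomputable def poly : MvPolynomial (Fin 3) ℝ :=
  X 0 ^ 4 * X 1 ^ 2 + X 0 ^ 2 * X 1 ^ 4 - 3 * X 0 ^ 2 * X 1 ^ 2 * X 2 ^ 2 + X 2 ^ 6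

noncomputable def expVec (a b c : ℕ) : Fin 3 →₀ ℕ := Finsupp.equivFunOnFinite.symm ![a, b, c]

@[simp] lemma expVec_apply_zero (a b c : ℕ) : expVec a b c 0 = a := rfl
@[simp] lemma expVec_apply_one (a b c : ℕ) : expVec a b c 1 = b := rfl
@[simp] lemma expVec_apply_two (a b c : ℕ) : expVec a b c 2 = c := rfl

lemma ext_fin_three {a b : Fin 3 →₀ ℕ} (h0 : a 0 = b 0) (h1 : a 1 = b 1) (h2 : a 2 = b 2) :
    a = b := by
  ext j; fin_cases j <;> assumption

lemma weight_fin_three (w : Fin 3 → ℕ) (d : Fin 3 →₀ ℕ) :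
    weight w d = d 0 * w 0 + d 1 * w 1 + d 2 * w 2 := by
  rw [Finsupp.weight_apply, Finsupp.sum_fintype _ _ (by simp), Fin.sum_univ_three]
  rfl

lemma poly_eq_sum_monomial : poly = monomial (expVec 4 2 0) 1 + monomial (expVec 2 4 0) 1
    + monomial (expVec 2 2 2) (-3) + monomial (expVec 0 0 6) 1 := by
  have e420 : Finsupp.single 0 4 + Finsupp.single 1 2 = expVec 4 2 0 := by
    ext j; fin_cases j <;> simp
  have e240 : Finsupp.single 0 2 + Finsupp.single 1 4 = expVec 2 4 0 := by
    ext j; fin_cases j <;> simp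
  have e222 : Finsupp.single 0 2 + Finsupp.single 1 2 + Finsupp.single 2 2 = expVec 2 2 2 := by
    ext j; fin_cases j <;> simp
  have e006 : Finsupp.single 2 6 = expVec 0 0 6 := by
    ext j; fin_cases j <;> simp
  rw [poly, show (3 : MvPolynomial (Fin 3) ℝ) = C 3 from (map_ofNat C 3).symm]
  simp only [X_pow_eq_monomial, C_mul_monomial, monomial_mul, e420, e240, e222, e006,
    sub_eq_add_neg, ← map_neg]
  norm_num

lemma coeff_poly_expVec_222 : coeff (expVec 2 2 2) poly = -3 := by
  have h420 : expVec 4 2 0 ≠ expVec 2 2 2 := fun h => by simpa using congr($h 0)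
  have h240 : expVec 2 4 0 ≠ expVec 2 2 2 := fun h => by simpa using congr($h 1)
  have h006 : expVec 0 0 6 ≠ expVec 2 2 2 := fun h => by simpa using congr($h 0)
  simp [poly_eq_sum_monomial, coeff_monomial, h420, h240, h006]

lemma weightedTotalDegree_poly_le (w : Fin 3 → ℕ) :
    weightedTotalDegree w poly ≤ max (max (4 * w 0 + 2 * w 1) (2 * w 0 + 4 * w 1))
      (max (2 * w 0 + 2 * w 1 + 2 * w 2) (6 * w 2)) := by
  refine Finset.sup_le fun d hd => ?_
  have hd : d = expVec 4 2 0 ∨ d = expVec 2 4 0 ∨ d = expVec 2 2 2 ∨ d = expVec 0 0 6 := by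
    by_contra! hne
    rw [mem_support_iff, poly_eq_sum_monomial] at hd
    simp [coeff_monomial, hne.1.symm, hne.2.1.symm, hne.2.2.1.symm, hne.2.2.2.symm] at hd
  rcases hd with rfl | rfl | rfl | rfl <;> simp [weight_fin_three]

/-- `![3, 0, 2]` and `![0, 3, 2]` are, modulo `![1, 1, 1]`, the outer normals of the two edges
through `(0,0,3)` of the half Newton polytope `conv {(2,1,0), (1,2,0), (0,0,3)}` of `poly`. -/
def Admissible (a : Fin 3 →₀ ℕ) : Prop :=
  a 0 + a 1 + a 2 ≤ 3 ∧ 3 * a 0 + 2 * a 2 ≤ 6 ∧ 3 * a 1 + 2 * a 2 ≤ 6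

lemma admissible_of_mem_support {ι : Type*} {s : Finset ι} {p : ι → MvPolynomial (Fin 3) ℝ}
    (h : poly = ∑ j ∈ s, p j ^ 2) {i : ι} (hi : i ∈ s) {a : Fin 3 →₀ ℕ}
    (ha : a ∈ (p i).support) : Admissible a := by
  have bound (w : Fin 3 → ℕ) :=
    calc 2 * weight w a ≤ 2 * weightedTotalDegree w (p i) :=
          Nat.mul_le_mul_left 2 (le_weightedTotalDegree w ha)
      _ ≤ weightedTotalDegree w poly := h ▸ two_mul_weightedTotalDegree_le_sum_sq w p hi
      _ ≤ _ := weightedTotalDegree_poly_le w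
  have h111 := bound ![1, 1, 1]
  have h302 := bound ![3, 0, 2]
  have h032 := bound ![0, 3, 2]
  simp [weight_fin_three] at h111 h302 h032
  exact ⟨by omega, by omega, by omega⟩

lemma eq_expVec_111_of_add_eq {a b : Fin 3 →₀ ℕ} (hab : a + b = expVec 1 1 1 + expVec 1 1 1)
    (ha : Admissible a) (hb : Admissible b) : a = expVec 1 1 1 := by
  obtain ⟨ha₁, ha₂, ha₃⟩ := ha
  obtain ⟨hb₁, hb₂, hb₃⟩ := hb
  have h0 : a 0 + b 0 = 2 := by simpa using congr($hab 0)
  have h1 : a 1 + b 1 = 2 := by simpa using congr($hab 1)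
  have h2 : a 2 + b 2 = 2 := by simpa using congr($hab 2)
  exact ext_fin_three (by simp; omega) (by simp; omega) (by simp; omega)

theorem poly_ne_sum_sq {ι : Type*} (s : Finset ι) (p : ι → MvPolynomial (Fin 3) ℝ) :
    poly ≠ ∑ i ∈ s, p i ^ 2 := by
  intro h
  have hcoeff : coeff (expVec 1 1 1 + expVec 1 1 1) poly =
      ∑ i ∈ s, coeff (expVec 1 1 1) (p i) ^ 2 := by
    rw [h, coeff_sum]
    refine Finset.sum_congr rfl fun i hi => coeff_add_self_sq fun a b hab ha hb => ?_
    exact eq_expVec_111_of_add_eq hab (admissible_of_mem_support h hi ha)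
      (admissible_of_mem_support h hi hb)
  rw [show expVec 1 1 1 + expVec 1 1 1 = expVec 2 2 2 from
    ext_fin_three (by simp) (by simp) (by simp), coeff_poly_expVec_222] at hcoeff
  have := Finset.sum_nonneg fun i (_ : i ∈ s) => sq_nonneg (coeff (expVec 1 1 1) (p i))
  linarith

end Motzkin

theorem motzkin_nonneg_and_not_sos :
    (∀ x : Fin 3 → ℝ, 0 ≤ MvPolynomial.eval x
      ((X 0) ^ 4 * (X 1) ^ 2 + (X 0) ^ 2 * (X 1) ^ 4
        - 3 * (X 0) ^ 2 * (X 1) ^ 2 * (X 2) ^ 2 + (X 2) ^ 6 : MvPolynomial (Fin 3) ℝ)) ∧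
    ¬ ∃ (r : ℕ) (p : Fin r → MvPolynomial (Fin 3) ℝ),
      ((X 0) ^ 4 * (X 1) ^ 2 + (X 0) ^ 2 * (X 1) ^ 4
        - 3 * (X 0) ^ 2 * (X 1) ^ 2 * (X 2) ^ 2 + (X 2) ^ 6 : MvPolynomial (Fin 3) ℝ)
        = ∑ i, (p i) ^ 2 := by
  refine ⟨fun x => ?_, fun ⟨r, p, h⟩ => Motzkin.poly_ne_sum_sq Finset.univ p h⟩
  simpa using Motzkin.form_nonneg (x 0) (x 1) (x 2)
end
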